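/- arXiv:1909.00607 — 3 statements merged into one kernel-verified Lean document; each statement's English description precedes it below -/
import Mathlib

section
/- With the setup of the previous statement (full outer join J of customers C and orders O with tuple factors F), for any real-valued attribute a : C → ℝ and predicate φ on customers with at least one customer satisfying φ, the average of a over customers satisfying φ equals ( Σ_{(c,·)∈J, φ(c)} a(c)/F(c) ) / ( Σ_{(c,·)∈J, φ(c)} 1/F(c) ). -/
open Finset

/-- With the full-outer-join setup (each customer `c` appears
`F c = max 1 (#orders of c)` times in `J`), for any attribute `a : C → ℝ` and
predicate `φ` satisfied by at least one customer, the average of `a` over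
customers satisfying `φ` equals
`(Σ_{(c,·)∈J, φ(c)} a(c)/F(c)) / (Σ_{(c,·)∈J, φ(c)} 1/F(c))`. -/
theorem avg_customers_from_full_outer_join
    {C O : Type*} [Fintype C] [Fintype O] [DecidableEq C]
    (owner : O → C)
    (ords : C → Finset O) (hords : ∀ c, ords c = Finset.univ.filter (fun o => owner o = c))
    (F : C → ℕ) (hF : ∀ c, F c = max 1 (ords c).card)
    (J : Multiset (C × Option O))
    (hJ : J = Finset.univ.val.bind (fun c : C =>
      if (ords c).card = 0 then {(c, (none : Option O))}
      else (ords c).val.map (fun o => (c, some o))))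
    (a : C → ℝ) (φ : C → Prop) [DecidablePred φ] (hφ : ∃ c, φ c) :
    (∑ c ∈ Finset.univ.filter φ, a c) / ((Finset.univ.filter φ).card : ℝ) =
      (J.map (fun r => if φ r.1 then a r.1 / (F r.1 : ℝ) else 0)).sum /
        (J.map (fun r => if φ r.1 then (1 : ℝ) / (F r.1 : ℝ) else 0)).sum := by
  have key : ∀ f : C → ℝ,
      (J.map (fun r => f r.1)).sum = ∑ c, (F c : ℝ) * f c := by
    intro f
    subst hJ
    rw [Multiset.map_bind, Multiset.sum_bind]
    rw [show (Finset.univ.val.map (fun c : C =>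
        (((if (ords c).card = 0 then {(c, (none : Option O))}
          else (ords c).val.map (fun o => (c, some o))).map
          (fun r : C × Option O => f r.1)).sum)))
      = Finset.univ.val.map (fun c : C => (F c : ℝ) * f c) from
      Multiset.map_congr rfl ?_]
    · rfl
    · intro c _
      by_cases h : (ords c).card = 0
      · simp [h, hF c]
      · rw [if_neg h, Multiset.map_map]
        have : ((fun x : C × Option O => f x.1) ∘ (fun o => (c, some o)))
            = fun _ => f c := rfl
        rw [this, Multiset.map_const', Multiset.sum_replicate, hF c]
        have hm : max 1 (ords c).card = (ords c).card := by omega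
        rw [hm]
        rw [nsmul_eq_mul]; rfl
  have hFpos : ∀ c, (F c : ℝ) ≠ 0 := by
    intro c
    have : 1 ≤ F c := by rw [hF c]; omega
    positivity
  rw [key (fun c => if φ c then a c / (F c : ℝ) else 0),
      key (fun c => if φ c then (1 : ℝ) / (F c : ℝ) else 0)]
  have h1 : ∑ c, (F c : ℝ) * (if φ c then a c / (F c : ℝ) else 0)
      = ∑ c ∈ Finset.univ.filter φ, a c := by
    rw [Finset.sum_filter]
    apply Finset.sum_congr rfl
    intro c _
    by_cases h : φ c
    · rw [if_pos h, if_pos h, mul_comm, div_mul_cancel₀ _ (hFpos c)]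
    · simp [h]
  have h2 : ∑ c, (F c : ℝ) * (if φ c then (1 : ℝ) / (F c : ℝ) else 0)
      = ((Finset.univ.filter φ).card : ℝ) := by
    rw [Finset.card_filter]
    push_cast
    apply Finset.sum_congr rfl
    intro c _
    by_cases h : φ c
    · rw [if_pos h, if_pos h, mul_one_div, div_self (hFpos c)]
    · simp [h]
  rw [h1, h2]
end

section
/- Let J be the full outer join of tables T₁, …, T_m along a chain of foreign keys, and for a query Q over a subset S of the tables let F'(Q,J)(r) be the product, over the omitted foreign-key relationships, of the tuple-factor columns of row r (each at least 1). If every row of the projection of Q appears in J exactly F'(Q,J)(r) · (indicator of having join partners) times, then COUNT of Q equals |J| · E_J( (1/F'(Q,J)) · 1_C · Π_{T∈S} N_T ), where E_J is the expectation under the uniform distribution on rows of J, C is the filter predicate, and N_T is the indicator that the T-part of the row is non-NULL. -/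
open Finset

lemma aux_swap {Row QRow : Type*} (Ans : Finset QRow)
    (J : Multiset Row) (f : Row → ℝ) (g : QRow → Row → ℝ)
    (h : ∀ r ∈ J, f r = ∑ t ∈ Ans, g t r) :
    (J.map f).sum = ∑ t ∈ Ans, (J.map (g t)).sum := by
  induction J using Multiset.induction with
  | empty => simp
  | cons a s ih =>
      simp only [Multiset.map_cons, Multiset.sum_cons]
      rw [h a (Multiset.mem_cons_self a s), ih (fun r hr => h r (Multiset.mem_cons_of_mem hr)),
        Finset.sum_add_distrib]

lemma aux_count {Row : Type*} (J : Multiset Row) (p : Row → Prop) [DecidablePred p] (c : ℝ) :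
    (J.map (fun r => if p r then c else 0)).sum = (J.countP p : ℝ) * c := by
  induction J using Multiset.induction with
  | empty => simp
  | cons a s ih =>
      simp only [Multiset.map_cons, Multiset.sum_cons, Multiset.countP_cons, ih]
      by_cases h : p a <;> simp [h] <;> ring

/-- Theorem 1 of DeepDB, general form: Let `J` be the full outer
join (a finite multiset of composite rows). A query `Q` over a subset of the
tables has answer set `Ans` (in the projected row space `QRow`); `C` is its
filter predicate on rows of `J`, `allN r` says all NULL-indicator columns `N_T`
(for tables `T` of `Q`) equal 1 on row `r`, and `F' : QRow → ℕ` is the product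
of the relevant tuple factors (each at least 1). If every answer tuple `t ∈ Ans`
appears in `J` exactly `F' t` times among rows with `C` and all `N_T = 1`, and
every such qualifying row projects into `Ans`, then
`COUNT(Q) = |J| · E_J((1/F') · 1_C · Π_T N_T)`. -/
theorem deepdb_theorem1_general
    {Row QRow : Type*} [DecidableEq QRow]
    (J : Multiset Row) (proj : Row → QRow)
    (Ans : Finset QRow)
    (Cpred : Row → Prop) [DecidablePred Cpred]
    (allN : Row → Prop) [DecidablePred allN]
    (F' : QRow → ℕ) (hF' : ∀ t, 1 ≤ F' t)
    (hmult : ∀ t ∈ Ans,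
      J.countP (fun r => proj r = t ∧ Cpred r ∧ allN r) = F' t)
    (hproj : ∀ r ∈ J, Cpred r → allN r → proj r ∈ Ans) :
    (Ans.card : ℝ) =
      (Multiset.card J : ℝ) *
        ((J.map (fun r =>
            if Cpred r ∧ allN r then (1 : ℝ) / (F' (proj r) : ℝ) else 0)).sum /
          (Multiset.card J : ℝ)) := by
  have key : (J.map (fun r =>
      if Cpred r ∧ allN r then (1 : ℝ) / (F' (proj r) : ℝ) else 0)).sum
      = (Ans.card : ℝ) := by
    rw [aux_swap Ans J _
      (fun t r => if proj r = t ∧ Cpred r ∧ allN r then (1 : ℝ) / (F' t : ℝ) else 0)]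
    · rw [Finset.sum_congr rfl (fun t ht => aux_count J _ _)]
      have : ∀ t ∈ Ans,
          ((J.countP fun r => proj r = t ∧ Cpred r ∧ allN r : ℕ) : ℝ) * ((1 : ℝ) / (F' t : ℝ))
            = 1 := by
        intro t ht
        rw [hmult t ht]
        have h0 : (F' t : ℝ) ≠ 0 := by
          exact_mod_cast Nat.one_le_iff_ne_zero.mp (hF' t)
        field_simp
      rw [Finset.sum_congr rfl this, Finset.sum_const, nsmul_eq_mul, mul_one]
    · intro r hr
      by_cases hc : Cpred r ∧ allN r
      · have hmem : proj r ∈ Ans := hproj r hr hc.1 hc.2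
        rw [if_pos hc, Finset.sum_eq_single_of_mem (proj r) hmem]
        · rw [if_pos ⟨rfl, hc⟩]
        · intro t ht hne
          rw [if_neg (by tauto)]
      · rw [if_neg hc, Finset.sum_eq_zero]
        intro t ht
        rw [if_neg (by tauto)]
  rw [key]
  by_cases hJ : J = 0
  · subst hJ
    have : Ans = ∅ := by
      by_contra h
      obtain ⟨t, ht⟩ := Finset.nonempty_iff_ne_empty.mpr h
      have h1 := hmult t ht
      have h2 := hF' t
      simp at h1
      omega
    simp [this]
  · have hc : (Multiset.card J : ℝ) ≠ 0 := by
      simp [Multiset.card_eq_zero, hJ]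
    field_simp
end

section
/- Let C and O be tables with a foreign key O → C and tuple factors F(c) = #orders of c. Let φ be a predicate on customers and ψ on orders. Under the uniform distribution on orders, assume the customer-attribute event φ (lifted to orders via the foreign key) is independent of ψ. Then the join count with both predicates can equivalently be computed as |O| · P_O(ψ) · E_C(1_φ · F) / E_C(F), where E_C is expectation under the uniform distribution over customers. -/
open Finset

/-!
Every order has exactly one owner, so the join count is the number of orders `o` with
`φ (owner o) ∧ ψ o`, and summing the tuple factors `F` over the customers satisfying `φ`
counts the orders `o` with `φ (owner o)`. Hence `E_C(1_φ · F) / E_C(F) = P_O(φ ∘ owner)`,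
and independence turns `|O| · P_O(ψ) · P_O(φ ∘ owner)` into the join count.
-/

section Fibers

variable {C O : Type*} [Fintype C] [Fintype O] [DecidableEq C]

theorem card_filter_graph_prod (f : O → C) (P : C → O → Prop) [∀ c o, Decidable (P c o)] :
    #{p ∈ (univ : Finset C) ×ˢ (univ : Finset O) | f p.2 = p.1 ∧ P p.1 p.2} =
      #{o | P (f o) o} := by
  refine card_nbij' Prod.snd (fun o => (f o, o)) ?_ ?_ ?_ ?_ <;> intro x <;> simp +contextual

theorem sum_ite_card_fiber (f : O → C) (p : C → Prop) [DecidablePred p] :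
    ∑ c, (if p c then (#{o | f o = c} : ℝ) else 0) = #{o | p (f o)} := by
  rw [← sum_filter]
  exact_mod_cast (by simpa using sum_card_fiberwise_eq_card_filter univ {c | p c} f)

theorem sum_card_fiber (f : O → C) : ∑ c, (#{o | f o = c} : ℝ) = Fintype.card O := by
  exact_mod_cast (by simpa using sum_card_fiberwise_eq_card_filter univ univ f)

end Fibers

theorem combine_two_rspns_alternative_normalization_general
    {C O : Type*} [Fintype C] [Fintype O] [DecidableEq C] [Nonempty O]
    (owner : O → C)
    (F : C → ℕ) (hF : ∀ c, F c = (Finset.univ.filter (fun o => owner o = c)).card)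
    (φ : C → Prop) [DecidablePred φ] (ψ : O → Prop) [DecidablePred ψ]
    (hindep :
      ((Finset.univ.filter (fun o : O => φ (owner o) ∧ ψ o)).card : ℝ) / (Fintype.card O : ℝ) =
        ((Finset.univ.filter (fun o : O => φ (owner o))).card : ℝ) / (Fintype.card O : ℝ) *
        (((Finset.univ.filter ψ).card : ℝ) / (Fintype.card O : ℝ))) :
    (((Finset.univ ×ˢ Finset.univ).filter
        (fun p : C × O => owner p.2 = p.1 ∧ φ p.1 ∧ ψ p.2)).card : ℝ) =
      (Fintype.card O : ℝ) *
        (((Finset.univ.filter ψ).card : ℝ) / (Fintype.card O : ℝ)) *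
        (((∑ c, (if φ c then (F c : ℝ) else 0)) / (Fintype.card C : ℝ)) /
          ((∑ c, (F c : ℝ)) / (Fintype.card C : ℝ))) := by
  have : Nonempty C := .map owner ‹_›
  have hO : (Fintype.card O : ℝ) ≠ 0 := Nat.cast_ne_zero.2 Fintype.card_ne_zero
  have hC : (Fintype.card C : ℝ) ≠ 0 := Nat.cast_ne_zero.2 Fintype.card_ne_zero
  simp only [hF]
  rw [card_filter_graph_prod owner (fun c o => φ c ∧ ψ o), sum_ite_card_fiber, sum_card_fiber,
    div_div_div_cancel_right₀ hC]
  calc _ = (Fintype.card O : ℝ) * (#{o | φ (owner o) ∧ ψ o} / Fintype.card O) :=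
        (mul_div_cancel₀ _ hO).symm
    _ = _ := by rw [hindep]; ring

/-- With a foreign key `owner : O → C` and tuple factors
`F c = #orders of c`, predicates `φ` on customers and `ψ` on orders, assuming the
lifted event `φ ∘ owner` is independent of `ψ` under the uniform distribution on
orders, the join count with both predicates equals
`|O| · P_O(ψ) · E_C(1_φ · F) / E_C(F)`. -/
theorem combine_two_rspns_alternative_normalization
    {C O : Type*} [Fintype C] [Fintype O] [DecidableEq C] [Nonempty C] [Nonempty O]
    (owner : O → C)
    (F : C → ℕ) (hF : ∀ c, F c = (Finset.univ.filter (fun o => owner o = c)).card)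
    (φ : C → Prop) [DecidablePred φ] (ψ : O → Prop) [DecidablePred ψ]
    (hindep :
      ((Finset.univ.filter (fun o : O => φ (owner o) ∧ ψ o)).card : ℝ) / (Fintype.card O : ℝ) =
        ((Finset.univ.filter (fun o : O => φ (owner o))).card : ℝ) / (Fintype.card O : ℝ) *
        (((Finset.univ.filter ψ).card : ℝ) / (Fintype.card O : ℝ))) :
    (((Finset.univ ×ˢ Finset.univ).filter
        (fun p : C × O => owner p.2 = p.1 ∧ φ p.1 ∧ ψ p.2)).card : ℝ) =
      (Fintype.card O : ℝ) *
        (((Finset.univ.filter ψ).card : ℝ) / (Fintype.card O : ℝ)) *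
        (((∑ c, (if φ c then (F c : ℝ) else 0)) / (Fintype.card C : ℝ)) /
          ((∑ c, (F c : ℝ)) / (Fintype.card C : ℝ))) :=
  combine_two_rspns_alternative_normalization_general owner F hF φ ψ hindep
end
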